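/- If the small-scale channel gain g̃ follows the F composite fading distribution with density f(g̃) = m^m·(m_s−1)^{m_s}·ḡ^{m_s}·g̃^{m−1} / (B(m,m_s)·(m·g̃ + (m_s−1)·ḡ)^{m+m_s}), then for every real n with −m < n < m_s, the n-th moment is E[g̃^n] = (m_s−1)^n·ḡ^n·Γ(m+n)·Γ(m_s−n) / (m^n·Γ(m)·Γ(m_s)). -/

import Mathlib

open Real MeasureTheory Set ProbabilityTheory

/-!
For `g > 0` the integrand `g ^ n * f g` is a constant multiple of the beta-prime kernel
`g ^ (a - 1) / (m * g + c) ^ (a + b)` with `a = m + n`, `b = ms - n`, `c = (ms - 1) * gbar`;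
the condition `-m < n < ms` says exactly that `a, b > 0`. After the scaling `g = (c / m) * t`
and the substitution `t = x / (1 - x)`, the kernel integrates to Euler's beta integral
`B(a, b) = Γ(a) Γ(b) / Γ(a + b)`.
-/

theorem integral_Ioo_rpow_mul_one_sub_rpow {a b : ℝ} (ha : 0 < a) (hb : 0 < b) :
    ∫ x in Ioo (0 : ℝ) 1, x ^ (a - 1) * (1 - x) ^ (b - 1) = beta a b := by
  have hcast : ((∫ x in (0 : ℝ)..1, x ^ (a - 1) * (1 - x) ^ (b - 1) : ℝ) : ℂ) =
      Complex.betaIntegral a b := by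
    rw [Complex.betaIntegral, ← intervalIntegral.integral_ofReal]
    refine intervalIntegral.integral_congr fun x hx => ?_
    rw [uIcc_of_le zero_le_one] at hx
    push_cast
    rw [Complex.ofReal_cpow hx.1, Complex.ofReal_cpow (sub_nonneg.2 hx.2)]
    push_cast
    rfl
  rw [beta_eq_betaIntegralReal a b ha hb, ← hcast, Complex.ofReal_re,
    intervalIntegral.integral_of_le zero_le_one, integral_Ioc_eq_integral_Ioo]

theorem image_div_one_sub_Ioo : (fun x : ℝ => x / (1 - x)) '' Ioo 0 1 = Ioi 0 := by
  ext t
  constructor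
  · rintro ⟨x, ⟨hx0, hx1⟩, rfl⟩
    exact div_pos hx0 (sub_pos.2 hx1)
  · intro (ht : 0 < t)
    refine ⟨t / (1 + t), ⟨by positivity, (div_lt_one (by positivity)).2 (by linarith)⟩, ?_⟩
    field_simp
    ring

theorem injOn_div_one_sub_Ioo : InjOn (fun x : ℝ => x / (1 - x)) (Ioo 0 1) := by
  intro x ⟨_, hx1⟩ y ⟨_, hy1⟩ hxy
  have : 1 - x ≠ 0 := (sub_pos.2 hx1).ne'
  have : 1 - y ≠ 0 := (sub_pos.2 hy1).ne'
  field_simp at hxy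
  linarith

theorem hasDerivAt_div_one_sub {x : ℝ} (hx : x ≠ 1) :
    HasDerivAt (fun x : ℝ => x / (1 - x)) (1 / (1 - x) ^ 2) x := by
  have h := (hasDerivAt_id' x).div ((hasDerivAt_id' x).const_sub 1) (sub_ne_zero.2 hx.symm)
  rwa [show (1 * (1 - x) - x * -1) / (1 - x) ^ 2 = 1 / (1 - x) ^ 2 by ring] at h

theorem integral_Ioi_rpow_div_one_add_rpow {a b : ℝ} (ha : 0 < a) (hb : 0 < b) :
    ∫ t in Ioi (0 : ℝ), t ^ (a - 1) / (1 + t) ^ (a + b) = beta a b := by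
  rw [← image_div_one_sub_Ioo, integral_image_eq_integral_abs_deriv_smul measurableSet_Ioo
    (fun x hx => (hasDerivAt_div_one_sub hx.2.ne).hasDerivWithinAt) injOn_div_one_sub_Ioo,
    ← integral_Ioo_rpow_mul_one_sub_rpow ha hb]
  refine setIntegral_congr_fun measurableSet_Ioo fun x ⟨hx0, hx1⟩ => ?_
  have h1x : 0 < 1 - x := sub_pos.2 hx1
  have hone_add : 1 + x / (1 - x) = (1 - x)⁻¹ := by field_simp; ring
  rw [hone_add, smul_eq_mul, abs_of_pos (by positivity), div_rpow hx0.le h1x.le, inv_rpow h1x.le,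
    rpow_sub h1x, rpow_sub h1x, rpow_sub hx0, rpow_add h1x, rpow_one, rpow_one]
  field_simp

theorem integral_Ioi_rpow_div_mul_add_rpow {a b p q : ℝ} (ha : 0 < a) (hb : 0 < b) (hp : 0 < p)
    (hq : 0 < q) :
    ∫ x in Ioi (0 : ℝ), x ^ (a - 1) / (p * x + q) ^ (a + b) = beta a b / (p ^ a * q ^ b) := by
  have hqp : 0 < q / p := div_pos hq hp
  have hscale := integral_comp_mul_left_Ioi' (fun x => x ^ (a - 1) / (p * x + q) ^ (a + b)) 0 hqp
  have hpointwise : ∀ t ∈ Ioi (0 : ℝ),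
      (q / p * t) ^ (a - 1) / (p * (q / p * t) + q) ^ (a + b) =
        (q / p) ^ (a - 1) / q ^ (a + b) * (t ^ (a - 1) / (1 + t) ^ (a + b)) := by
    intro t (ht : 0 < t)
    rw [show p * (q / p * t) + q = q * (1 + t) by field_simp; ring,
      mul_rpow hqp.le ht.le, mul_rpow hq.le (by positivity)]
    ring
  rw [mul_zero] at hscale
  rw [← hscale, setIntegral_congr_fun measurableSet_Ioi hpointwise, integral_const_mul,
    integral_Ioi_rpow_div_one_add_rpow ha hb, smul_eq_mul, rpow_sub_one hqp.ne', rpow_add hq,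
    div_rpow hq.le hp.le]
  field_simp

theorem F_composite_fading_moment (m ms gbar : ℝ) (hm : 0 < m) (hms : 1 < ms)
    (hg : 0 < gbar) (n : ℝ) (hn1 : -m < n) (hn2 : n < ms)
    (f : ℝ → ℝ)
    (hf : ∀ g : ℝ, f g =
      m ^ m * (ms - 1) ^ ms * gbar ^ ms * g ^ (m - 1) /
        ((Real.Gamma m * Real.Gamma ms / Real.Gamma (m + ms)) *
          (m * g + (ms - 1) * gbar) ^ (m + ms))) :
    ∫ g in Set.Ioi (0 : ℝ), g ^ n * f g =
      (ms - 1) ^ n * gbar ^ n * Real.Gamma (m + n) * Real.Gamma (ms - n) /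
        (m ^ n * Real.Gamma m * Real.Gamma ms) := by
  have hms1 : 0 < ms - 1 := sub_pos.2 hms
  have hc : 0 < (ms - 1) * gbar := mul_pos hms1 hg
  have hmoment : ∀ g ∈ Ioi (0 : ℝ), g ^ n * f g = m ^ m * ((ms - 1) * gbar) ^ ms / beta m ms *
      (g ^ ((m + n) - 1) / (m * g + (ms - 1) * gbar) ^ ((m + n) + (ms - n))) := by
    intro g (hg0 : 0 < g)
    rw [hf, mul_rpow hms1.le hg.le, show m + n - 1 = n + (m - 1) by ring, rpow_add hg0,
      show m + n + (ms - n) = m + ms by ring]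
    simp only [beta]
    ring
  rw [setIntegral_congr_fun measurableSet_Ioi hmoment, integral_const_mul,
    integral_Ioi_rpow_div_mul_add_rpow (by linarith) (by linarith) hm hc]
  simp only [beta, rpow_add hm, rpow_sub hc, mul_rpow hms1.le hg.le,
    show m + n + (ms - n) = m + ms by ring]
  have := Gamma_pos_of_pos hm
  have := Gamma_pos_of_pos (by linarith : 0 < ms)
  have := Gamma_pos_of_pos (by linarith : 0 < m + ms)
  field_simp
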